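/- Let M be an MSC over P and Σ, let p, q ∈ P, let π, π' ∈ Π_{p,q}, and let e, f ∈ E_q with e →* f. If f_{π,π'}(e) ∈ E_q and f_{π,π'}(f) ∈ E_q (i.e., neither equals ⊥ nor ⊤), then f_{π,π'}(e) ≤ f_{π,π'}(f). -/

import Mathlib

/-! Path expressions have an exchange property: if `⟦π⟧` relates `x` to `y` and `x'` to `y'`,
where `x →* x'` and `y' →* y`, then it also relates `x'` to `y` and `x` to `y'`. Letter by
letter this is the uniqueness of `→`-successors and predecessors, and FIFO for messages.
Consequently `last_π` is monotone along `→*`: if `last_π(f) →* last_π(e)` with `e →* f`,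
exchange yields a `π`-path from `last_π(e)` to `f`, so the two coincide. Dually `first_{π'}` is
monotone, and composing the two gives the monotonicity of `f_{π,π'}`. -/

namespace Gossip

/-- Events extended with bottom and top elements. -/
inductive ExtEv (E : Type) : Type where
  | bot : ExtEv E
  | evt (e : E) : ExtEv E
  | top : ExtEv E

/-- A message sequence chart (MSC) over processes `P`, alphabet `A`,
with (finite, nonempty) set of events `E`. -/
structure MSC (P A E : Type) : Type where
  fintypeE : Fintype E
  nonemptyE : Nonempty E
  loc : E → P
  lab : E → A
  /-- process successor relation `→` -/
  next : E → E → Prop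
  /-- message relation `◁` -/
  msg : E → E → Prop
  next_loc : ∀ {e f : E}, next e f → loc e = loc f
  next_irrefl : ∀ e : E, ¬ next e e
  next_right_unique : ∀ {e f f' : E}, next e f → next e f' → f = f'
  next_left_unique : ∀ {e e' f : E}, next e f → next e' f → e = e'
  next_total : ∀ e f : E, loc e = loc f →
      Relation.ReflTransGen next e f ∨ Relation.ReflTransGen next f e
  msg_loc : ∀ {e f : E}, msg e f → loc e ≠ loc f
  /-- every event belongs to at most one pair of `◁` -/
  msg_unique : ∀ {e f e' f' : E}, msg e f → msg e' f' →
      (e = e' ∨ e = f' ∨ f = e' ∨ f = f') → e = e' ∧ f = f'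
  fifo : ∀ {e f e' f' : E}, msg e f → msg e' f' → loc e = loc e' → loc f = loc f' →
      (Relation.ReflTransGen next e e' ↔ Relation.ReflTransGen next f f')
  /-- `≤ = (→ ∪ ◁)*` is a partial order -/
  causal_antisymm : ∀ {e f : E},
      Relation.ReflTransGen (fun x y => next x y ∨ msg x y) e f →
      Relation.ReflTransGen (fun x y => next x y ∨ msg x y) f e → e = f

namespace MSC

variable {P A E B : Type}

/-- the causal order `≤ = (→ ∪ ◁)*` -/
def le (M : MSC P A E) : E → E → Prop :=
  Relation.ReflTransGen (fun x y => M.next x y ∨ M.msg x y)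

/-- the strict causal order `<` -/
def lt (M : MSC P A E) (e f : E) : Prop := M.le e f ∧ e ≠ f

/-- `→*` -/
def nextStar (M : MSC P A E) : E → E → Prop := Relation.ReflTransGen M.next

/-- the causal order extended to `E ∪ {⊥,⊤}` with `⊥ < e < ⊤` -/
def extLe (M : MSC P A E) : ExtEv E → ExtEv E → Prop
  | .bot, _ => True
  | _, .top => True
  | .evt e, .evt f => M.le e f
  | _, _ => False

def extLt (M : MSC P A E) (x y : ExtEv E) : Prop := M.extLe x y ∧ x ≠ y

/-- replace the labelling of an MSC (e.g. to pair it with an extra labelling) -/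
def relabel (M : MSC P A E) (μ : E → B) : MSC P B E where
  fintypeE := M.fintypeE
  nonemptyE := M.nonemptyE
  loc := M.loc
  lab := μ
  next := M.next
  msg := M.msg
  next_loc := M.next_loc
  next_irrefl := M.next_irrefl
  next_right_unique := M.next_right_unique
  next_left_unique := M.next_left_unique
  next_total := M.next_total
  msg_loc := M.msg_loc
  msg_unique := M.msg_unique
  fifo := M.fifo
  causal_antisymm := M.causal_antisymm

end MSC

/-- letters of path expressions: `→`, `→*`, `p▷q`, `⟨a⟩` -/
inductive PathLetter (P A : Type) : Type where
  | next : PathLetter P A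
  | nextStar : PathLetter P A
  | msg (p q : P) : PathLetter P A
  | lab (a : A) : PathLetter P A

/-- path expressions: finite words over `Γ` -/
abbrev PathExpr (P A : Type) := List (PathLetter P A)

variable {P A E : Type}

def letterSem (M : MSC P A E) : PathLetter P A → E → E → Prop
  | .next => M.next
  | .nextStar => M.nextStar
  | .msg p q => fun e f => M.loc e = p ∧ M.loc f = q ∧ M.msg e f
  | .lab a => fun e f => e = f ∧ M.lab e = a

/-- `⟦π⟧` -/
def pathSem (M : MSC P A E) : PathExpr P A → E → E → Prop
  | [] => fun e f => e = f
  | l :: π => fun e g => ∃ f, letterSem M l e f ∧ pathSem M π f g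

def letterComp : PathLetter P A → P → P → Prop
  | .msg p q => fun x y => x = p ∧ y = q
  | _ => fun x y => x = y

/-- `Comp(π)`; `π ∈ Π_{p,q}` iff `pcomp π p q` -/
def pcomp : PathExpr P A → P → P → Prop
  | [] => fun x y => x = y
  | l :: π => fun x z => ∃ y, letterComp l x y ∧ pcomp π y z

/-- `IsLast M π e x` holds iff `x = last_π(e)` (with `x = ⊥` iff no `π`-path into `e`). -/
def IsLast (M : MSC P A E) (π : PathExpr P A) (e : E) : ExtEv E → Prop
  | .bot => ∀ f, ¬ pathSem M π f e
  | .evt g => pathSem M π g e ∧ ∀ f, pathSem M π f e → M.le f g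
  | .top => False

/-- `IsFirst M π e x` holds iff `x = first_π(e)` (with `x = ⊤` iff no `π`-path out of `e`). -/
def IsFirst (M : MSC P A E) (π : PathExpr P A) (e : E) : ExtEv E → Prop
  | .top => ∀ f, ¬ pathSem M π e f
  | .evt g => pathSem M π e g ∧ ∀ f, pathSem M π e f → M.le g f
  | .bot => False

/-- `IsFa M π π' e x` holds iff `x = f_{π,π'}(e) = first_{π'}(last_π(e))`, with
`first_{π'}(⊥) := ⊥`. -/
def IsFa (M : MSC P A E) (π π' : PathExpr P A) (e : E) (x : ExtEv E) : Prop :=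
  (IsLast M π e ExtEv.bot ∧ x = ExtEv.bot) ∨
    ∃ g, IsLast M π e (ExtEv.evt g) ∧ IsFirst M π' g x

/-- `IsLastProc M p e x` holds iff `x = last_p(e)`, the maximal event of process `p`
strictly below `e` (`⊥` if none). -/
def IsLastProc (M : MSC P A E) (p : P) (e : E) : ExtEv E → Prop
  | .bot => ∀ f, M.loc f = p → ¬ M.lt f e
  | .evt g => M.loc g = p ∧ M.lt g e ∧ ∀ f, M.loc f = p → M.lt f e → M.le f g
  | .top => False

/-- `π ≼_e π'`, i.e. `last_π(e) ≤ last_{π'}(e)` -/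
def ple (M : MSC P A E) (π π' : PathExpr P A) (e : E) : Prop :=
  ∃ x y, IsLast M π e x ∧ IsLast M π' e y ∧ M.extLe x y

def gossipSuffix : P → List P → PathExpr P A
  | _, [] => []
  | p, q :: w => PathLetter.msg p q :: PathLetter.nextStar :: gossipSuffix q w

/-- `π_w` for `w = p :: rest` -/
def gossipExpr (p : P) (w : List P) : PathExpr P A :=
  match w with
  | [] => [PathLetter.next, PathLetter.nextStar]
  | _ :: _ => PathLetter.nextStar :: gossipSuffix p w

/-- `π ∈ Π^gossip` -/
def IsGossip (π : PathExpr P A) : Prop :=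
  ∃ (p : P) (w : List P), (p :: w).Nodup ∧ π = gossipExpr p w

/-- actions of a CFM transition -/
inductive CAct (P A Msg : Type) : Type where
  | internal (a : A) : CAct P A Msg
  | send (a : A) (m : Msg) (q : P) : CAct P A Msg
  | recv (a : A) (m : Msg) (q : P) : CAct P A Msg

def CAct.labelOf {P A Msg : Type} : CAct P A Msg → A
  | .internal a => a
  | .send a _ _ => a
  | .recv a _ _ => a

/-- a communicating finite-state machine over `P` and `A` -/
structure CFM (P A : Type) : Type 1 where
  Msg : Type
  msgFin : Fintype Msg
  S : Type
  sFin : Fintype S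
  ι : P → S
  Δ : P → Set (S × CAct P A Msg × S)
  Acc : Set (P → S)
  wf_send : ∀ p s a m q s', (s, CAct.send a m q, s') ∈ Δ p → q ≠ p
  wf_recv : ∀ p s a m q s', (s, CAct.recv a m q, s') ∈ Δ p → q ≠ p

namespace CFM

variable {P A E : Type}

/-- `ρ` is a run of the CFM `C` on the MSC `M` -/
def IsRun (C : CFM P A) (M : MSC P A E) (ρ : E → C.S × CAct P A C.Msg × C.S) : Prop :=
  (∀ e, ρ e ∈ C.Δ (M.loc e)) ∧
  (∀ e, ((ρ e).2.1).labelOf = M.lab e) ∧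
  (∀ e, (¬ ∃ f, M.next f e) → (ρ e).1 = C.ι (M.loc e)) ∧
  (∀ e f, M.next e f → (ρ e).2.2 = (ρ f).1) ∧
  (∀ e, (¬ ∃ f, M.msg e f) → (¬ ∃ f, M.msg f e) → ∃ a, (ρ e).2.1 = CAct.internal a) ∧
  (∀ e f, M.msg e f → ∃ m, (ρ e).2.1 = CAct.send (M.lab e) m (M.loc f) ∧
      (ρ f).2.1 = CAct.recv (M.lab f) m (M.loc e))

/-- the run `ρ` is accepting -/
def IsAccepting (C : CFM P A) (M : MSC P A E)
    (ρ : E → C.S × CAct P A C.Msg × C.S) : Prop :=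
  ∃ s : P → C.S, s ∈ C.Acc ∧ ∀ p,
    ((∃ e, M.loc e = p) → ∃ e, M.loc e = p ∧ (¬ ∃ f, M.next e f) ∧ s p = (ρ e).2.2) ∧
    ((¬ ∃ e, M.loc e = p) → s p = C.ι p)

/-- `M ∈ L(C)` -/
def Accepts (C : CFM P A) (M : MSC P A E) : Prop :=
  ∃ ρ, C.IsRun M ρ ∧ C.IsAccepting M ρ

/-- deterministic CFMs -/
def Deterministic (C : CFM P A) : Prop :=
  ∀ p s γ₁ s₁ γ₂ s₂, (s, γ₁, s₁) ∈ C.Δ p → (s, γ₂, s₂) ∈ C.Δ p →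
    CAct.labelOf γ₁ = CAct.labelOf γ₂ →
    ((∀ a₁ a₂, γ₁ = CAct.internal a₁ → γ₂ = CAct.internal a₂ → s₁ = s₂) ∧
     (∀ a₁ m₁ a₂ m₂ q, γ₁ = CAct.send a₁ m₁ q → γ₂ = CAct.send a₂ m₂ q →
        s₁ = s₂ ∧ m₁ = m₂) ∧
     (∀ a₁ a₂ m q, γ₁ = CAct.recv a₁ m q → γ₂ = CAct.recv a₂ m q → s₁ = s₂))

end CFM

/-- acceptance of the extended MSC `(M, ξ)` by a CFM over a product alphabet -/
def AcceptsExt {P A E Ξ : Type} (C : CFM P (A × Ξ)) (M : MSC P A E) (ξ : E → Ξ) : Prop :=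
  C.Accepts (M.relabel fun e => (M.lab e, ξ e))

/-- apply `μ` to an extended event, sending both `⊥` and `⊤` to `none` -/
def extToOptMap {E Θ : Type} (μ : E → Θ) : ExtEv E → Option Θ
  | .evt g => some (μ g)
  | _ => none

/-- apply `μ` to an extended event, preserving `⊥` and `⊤` -/
def extMap {E Θ : Type} (μ : E → Θ) : ExtEv E → ExtEv Θ
  | .bot => ExtEv.bot
  | .evt g => ExtEv.evt (μ g)
  | .top => ExtEv.top

/-- formulas of the temporal logic TL -/
inductive TL (P A : Type) : Type where
  | lab (a : A) : TL P A
  | proc (p : P) : TL P A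
  | disj (φ ψ : TL P A) : TL P A
  | neg (φ : TL P A) : TL P A
  | co (φ : TL P A) : TL P A
  | tuntil (φ ψ : TL P A) : TL P A
  | tsince (φ ψ : TL P A) : TL P A

/-- `M, e ⊨ φ` -/
def TLsat (M : MSC P A E) : TL P A → E → Prop
  | .lab a, e => M.lab e = a
  | .proc p, e => M.loc e = p
  | .disj φ ψ, e => TLsat M φ e ∨ TLsat M ψ e
  | .neg φ, e => ¬ TLsat M φ e
  | .co φ, e => ∃ f, ¬ M.le e f ∧ ¬ M.le f e ∧ TLsat M φ f
  | .tuntil φ ψ, e => ∃ f, M.lt e f ∧ TLsat M ψ f ∧ ∀ g, M.lt e g → M.lt g f → TLsat M φ g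
  | .tsince φ ψ, e => ∃ f, M.lt f e ∧ TLsat M ψ f ∧ ∀ g, M.lt f g → M.lt g e → TLsat M φ g

namespace MSC

variable (M : MSC P A E)

theorem nextStar_le {x y : E} (h : M.nextStar x y) : M.le x y :=
  Relation.ReflTransGen.mono (fun _ _ => Or.inl) _ _ h

theorem nextStar_antisymm {x y : E} (h : M.nextStar x y) (h' : M.nextStar y x) : x = y :=
  M.causal_antisymm (M.nextStar_le h) (M.nextStar_le h')

theorem loc_eq_of_nextStar {x y : E} (h : M.nextStar x y) : M.loc x = M.loc y := by
  induction h with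
  | refl => rfl
  | tail _ hyz ih => exact ih.trans (M.next_loc hyz)

theorem nextStar_of_next_of_next {x x' y y' : E} (hx : M.nextStar x x') (hy : M.next x y)
    (hy' : M.next x' y') : M.nextStar y y' := by
  rcases hx.cases_head with rfl | ⟨z, hz, hzx'⟩
  · rw [M.next_right_unique hy hy']
    exact .refl
  · exact Relation.ReflTransGen.tail (M.next_right_unique hy hz ▸ hzx') hy'

end MSC

variable {M : MSC P A E}

theorem letterSem_loc_eq_iff {l : PathLetter P A} {x y x' y' : E} (h : letterSem M l x y)
    (h' : letterSem M l x' y') : M.loc x = M.loc x' ↔ M.loc y = M.loc y' := by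
  cases l with
  | next => rw [M.next_loc h, M.next_loc h']
  | nextStar => rw [M.loc_eq_of_nextStar h, M.loc_eq_of_nextStar h']
  | lab a => rw [h.1, h'.1]
  | msg p q => exact iff_of_true (h.1.trans h'.1.symm) (h.2.1.trans h'.2.1.symm)

theorem pathSem_loc_eq_iff {π : PathExpr P A} {x y x' y' : E} (h : pathSem M π x y)
    (h' : pathSem M π x' y') : M.loc x = M.loc x' ↔ M.loc y = M.loc y' := by
  induction π generalizing x x' with
  | nil => cases h; cases h'; rfl
  | cons l π ih =>
    obtain ⟨m, hl, hm⟩ := h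
    obtain ⟨m', hl', hm'⟩ := h'
    exact (letterSem_loc_eq_iff hl hl').trans (ih hm hm')

theorem letterSem_exchange {l : PathLetter P A} {x y x' y' : E} (h : letterSem M l x y)
    (h' : letterSem M l x' y') (hx : M.nextStar x x') (hy : M.nextStar y' y) :
    letterSem M l x' y ∧ letterSem M l x y' := by
  cases l with
  | next =>
    obtain rfl : y = y' := M.nextStar_antisymm (M.nextStar_of_next_of_next hx h h') hy
    obtain rfl : x = x' := M.next_left_unique h h'
    exact ⟨h, h⟩
  | nextStar => exact ⟨h'.trans hy, hx.trans h'⟩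
  | lab a =>
    obtain ⟨rfl, ha⟩ := h
    obtain ⟨rfl, -⟩ := h'
    obtain rfl : x = x' := M.nextStar_antisymm hx hy
    exact ⟨⟨rfl, ha⟩, ⟨rfl, ha⟩⟩
  | msg p q =>
    obtain ⟨hx₁, hy₁, hmsg⟩ := h
    obtain ⟨hx₂, hy₂, hmsg'⟩ := h'
    have hyy' : M.nextStar y y' :=
      (M.fifo hmsg hmsg' (hx₁.trans hx₂.symm) (hy₁.trans hy₂.symm)).1 hx
    obtain ⟨rfl, rfl⟩ :=
      M.msg_unique hmsg hmsg' (Or.inr (Or.inr (Or.inr (M.nextStar_antisymm hyy' hy))))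
    exact ⟨⟨hx₁, hy₁, hmsg⟩, ⟨hx₁, hy₁, hmsg⟩⟩

theorem pathSem_exchange {π : PathExpr P A} {x y x' y' : E} (h : pathSem M π x y)
    (h' : pathSem M π x' y') (hx : M.nextStar x x') (hy : M.nextStar y' y) :
    pathSem M π x' y ∧ pathSem M π x y' := by
  induction π generalizing x x' with
  | nil =>
    cases h; cases h'
    obtain rfl := M.nextStar_antisymm hx hy
    exact ⟨rfl, rfl⟩
  | cons l π ih =>
    obtain ⟨m, hl, hm⟩ := h
    obtain ⟨m', hl', hm'⟩ := h'
    rcases M.next_total m m' ((letterSem_loc_eq_iff hl hl').1 (M.loc_eq_of_nextStar hx))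
      with hmm' | hm'm
    · obtain ⟨h₁, h₂⟩ := ih hm hm' hmm'
      exact ⟨⟨m', hl', h₁⟩, ⟨m, hl, h₂⟩⟩
    · obtain ⟨h₁, h₂⟩ := letterSem_exchange hl hl' hx hm'm
      exact ⟨⟨m, h₁, hm⟩, ⟨m', h₂, hm'⟩⟩

theorem IsLast.nextStar_of_nextStar {π : PathExpr P A} {e f g₁ g₂ : E}
    (hg₁ : IsLast M π e (.evt g₁)) (hg₂ : IsLast M π f (.evt g₂)) (hef : M.nextStar e f) :
    M.nextStar g₁ g₂ := by
  obtain ⟨hpath₁, -⟩ := hg₁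
  obtain ⟨hpath₂, hmax₂⟩ := hg₂
  rcases M.next_total g₁ g₂ ((pathSem_loc_eq_iff hpath₁ hpath₂).2 (M.loc_eq_of_nextStar hef))
    with h₁₂ | h₂₁
  · exact h₁₂
  · have hg₁f : pathSem M π g₁ f := (pathSem_exchange hpath₂ hpath₁ h₂₁ hef).1
    obtain rfl : g₁ = g₂ := M.causal_antisymm (hmax₂ g₁ hg₁f) (M.nextStar_le h₂₁)
    exact h₂₁

theorem IsFirst.le_of_nextStar {π : PathExpr P A} {x y g h : E}
    (hg : IsFirst M π x (.evt g)) (hh : IsFirst M π y (.evt h)) (hxy : M.nextStar x y) :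
    M.le g h := by
  obtain ⟨hpath_g, hmin_g⟩ := hg
  obtain ⟨hpath_h, -⟩ := hh
  rcases M.next_total g h ((pathSem_loc_eq_iff hpath_g hpath_h).1 (M.loc_eq_of_nextStar hxy))
    with hgh | hhg
  · exact M.nextStar_le hgh
  · exact hmin_g h (pathSem_exchange hpath_g hpath_h hxy hhg).2

end Gossip

open Gossip in
theorem stmt4_general {P A E : Type} (M : MSC P A E) (π π' : PathExpr P A) (e f : E)
    (hef : Relation.ReflTransGen M.next e f)
    (g h : E) (hg : IsFa M π π' e (ExtEv.evt g)) (hh : IsFa M π π' f (ExtEv.evt h)) :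
    M.le g h := by
  obtain ⟨-, ⟨⟩⟩ | ⟨g₁, hlast₁, hfirst₁⟩ := hg
  obtain ⟨-, ⟨⟩⟩ | ⟨g₂, hlast₂, hfirst₂⟩ := hh
  exact hfirst₁.le_of_nextStar hfirst₂ (hlast₁.nextStar_of_nextStar hlast₂ hef)

open Gossip in
/-- Lemma 2: monotonicity of `f_{π,π'}`: for `π, π' ∈ Π_{p,q}`,
`e, f ∈ E_q` with `e →* f`, if `f_{π,π'}(e)` and `f_{π,π'}(f)` are events
(neither `⊥` nor `⊤`), then `f_{π,π'}(e) ≤ f_{π,π'}(f)`. -/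
theorem stmt4 {P A E : Type} [Fintype P] [Fintype A] (M : MSC P A E)
    (p q : P) (π π' : PathExpr P A)
    (hπ : pcomp π p q) (hπ' : pcomp π' p q)
    (e f : E) (he : M.loc e = q) (hf : M.loc f = q)
    (hef : Relation.ReflTransGen M.next e f)
    (g h : E) (hg : IsFa M π π' e (ExtEv.evt g)) (hh : IsFa M π π' f (ExtEv.evt h)) :
    M.le g h :=
  stmt4_general M π π' e f hef g h hg hh
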